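/- arXiv:1901.09176 — 2 statements merged into one kernel-verified Lean document; each statement's English description precedes it below -/
import Mathlib

section
/- Let R > 0 and let h: ℝ^m → ℝ^m be Lipschitz with constant κ_R on the closed ball B_R of radius R centered at 0. Let u, u_n: [0,1] → ℝ^m be continuous, let r', r'_n: [0,1] → [0,∞) be integrable with r'_n bounded, and suppose u_y and u_{y_n} are continuous functions from [0,1] to ℝ^m satisfying u_y(s) = u(s) + ∫₀^s h(u_y(w)) r'(w) dw and u_{y_n}(s) = u_n(s) + ∫₀^s h(u_{y_n}(w)) r'_n(w) dw for all s ∈ [0,1], with sup_{s}|u_y(s)| ≤ R and sup_{s}|u_{y_n}(s)| ≤ R. Then sup_{s ∈ [0,1]} |u_{y_n}(s) - u_y(s)| ≤ (sup_{s ∈ [0,1]} |u_n(s) - u(s)| + (∫₀¹ |r'_n(w) - r'(w)| dw) · sup_{z ∈ B_R} |h(z)|) · e^{κ_R sup_{w ∈ [0,1]} r'_n(w)}. -/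
/-!
Write `φ s = ‖u_{y_n} s - u_y s‖`. Subtracting the two integral equations and splitting
`r'_n • h (u_{y_n}) - r' • h (u_y) = r'_n • (h (u_{y_n}) - h (u_y)) + (r'_n - r') • h (u_y)`
gives `φ s ≤ A + κ_R B ∫₀ˢ φ`, with `A = sup ‖u_n - u‖ + ‖r'_n - r'‖₁ · sup_{B_R} ‖h‖` and
`B = sup r'_n`; Grönwall's inequality then bounds `φ s` by `A e^{κ_R B s}`.
-/

open MeasureTheory Set Real

theorem le_cbiSup_of_bddAbove_image {β : Type*} {f : β → ℝ} {s : Set β}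
    (H : BddAbove (f '' s)) {c : β} (hc : c ∈ s) : f c ≤ ⨆ i ∈ s, f i :=
  le_ciSup₂ (f := fun i (_ : i ∈ s) => f i)
    (H.mono <| by rintro _ ⟨_, ⟨i, rfl⟩, ⟨hi, rfl⟩⟩; exact ⟨i, hi, rfl⟩) c hc

theorem norm_smul_sub_smul_le {𝕜 E : Type*} [NormedField 𝕜] [SeminormedAddCommGroup E]
    [NormedSpace 𝕜 E] (a b : 𝕜) (x y : E) :
    ‖a • x - b • y‖ ≤ ‖a‖ * ‖x - y‖ + ‖a - b‖ * ‖y‖ := by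
  calc ‖a • x - b • y‖ = ‖a • (x - y) + (a - b) • y‖ := by
        rw [smul_sub, sub_smul]; abel_nf
    _ ≤ ‖a‖ * ‖x - y‖ + ‖a - b‖ * ‖y‖ := by
        simpa only [norm_smul] using norm_add_le (a • (x - y)) ((a - b) • y)

theorem hasDerivWithinAt_integral_Icc_of_continuousOn {E : Type*} [NormedAddCommGroup E]
    [NormedSpace ℝ E] [CompleteSpace E] {φ : ℝ → E} {a b t : ℝ}
    (hφ : ContinuousOn φ (Icc a b)) (ht : t ∈ Icc a b) :
    HasDerivWithinAt (fun x => ∫ w in a..x, φ w) (φ t) (Icc a b) t := by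
  have : Fact (t ∈ Icc a b) := ⟨ht⟩
  refine intervalIntegral.integral_hasDerivWithinAt_right ?_
    (hφ.stronglyMeasurableAtFilter_nhdsWithin measurableSet_Icc t) (hφ t ht)
  exact (hφ.mono (uIcc_subset_Icc (left_mem_Icc.2 (ht.1.trans ht.2)) ht)).intervalIntegrable

theorem le_mul_exp_of_le_add_mul_integral {φ : ℝ → ℝ} {a b A C : ℝ} (hC : 0 ≤ C)
    (hφ : ContinuousOn φ (Icc a b))
    (hle : ∀ t ∈ Icc a b, φ t ≤ A + C * ∫ w in a..t, φ w) :
    ∀ t ∈ Icc a b, φ t ≤ A * exp (C * (t - a)) := by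
  set ψ : ℝ → ℝ := fun t => A + C * ∫ w in a..t, φ w
  have hψ_deriv : ∀ t ∈ Ico a b, HasDerivWithinAt ψ (C * φ t) (Ici t) t := fun t ht =>
    (((hasDerivWithinAt_integral_Icc_of_continuousOn hφ (Ico_subset_Icc_self ht)).const_mul
      C).const_add A).mono_of_mem_nhdsWithin (Icc_mem_nhdsGE_of_mem ht)
  have hψ_cont : ContinuousOn ψ (Icc a b) := fun t ht =>
    ((hasDerivWithinAt_integral_Icc_of_continuousOn hφ ht).continuousWithinAt.const_mul
      C).const_add A
  intro t ht
  have hψ_le := le_gronwallBound_of_liminf_deriv_right_le (δ := A) (K := C) (ε := 0) hψ_cont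
    (fun x hx _ hr => (hψ_deriv x hx).liminf_right_slope_le hr) (by simp [ψ])
    (fun x hx => by simpa using mul_le_mul_of_nonneg_left (hle x (Ico_subset_Icc_self hx)) hC)
    t ht
  rw [gronwallBound_ε0] at hψ_le
  exact (hle t ht).trans hψ_le

section IntegralEquation

variable {E : Type*} [NormedAddCommGroup E] [NormedSpace ℝ E]
  {h : E → E} {K : Set E} {κ : NNReal} {M A B a b : ℝ}
  {u un y yn : ℝ → E} {r rn : ℝ → ℝ}

theorem norm_sub_le_add_mul_integral_of_integral_eq (hLip : LipschitzOnWith κ h K)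
    (hM : ∀ z ∈ K, ‖h z‖ ≤ M)
    (hy : ContinuousOn y (Icc a b)) (hyn : ContinuousOn yn (Icc a b))
    (hyK : MapsTo y (Icc a b) K) (hynK : MapsTo yn (Icc a b) K)
    (hr : IntegrableOn r (Icc a b)) (hrn : IntegrableOn rn (Icc a b))
    (hrnB : ∀ w ∈ Icc a b, |rn w| ≤ B)
    (heq : ∀ s ∈ Icc a b, y s = u s + ∫ w in Icc a s, r w • h (y w))
    (heqn : ∀ s ∈ Icc a b, yn s = un s + ∫ w in Icc a s, rn w • h (yn w))
    (hA : ∀ s ∈ Icc a b, ‖un s - u s‖ ≤ A) :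
    ∀ s ∈ Icc a b, ‖yn s - y s‖ ≤
      A + (∫ w in Icc a b, |rn w - r w|) * M + κ * B * ∫ w in a..s, ‖yn w - y w‖ := by
  intro s hs
  have hsub : Icc a s ⊆ Icc a b := Icc_subset_Icc_right hs.2
  have hM0 : 0 ≤ M := (norm_nonneg _).trans (hM _ (hyK hs))
  have hg : IntegrableOn (fun w => r w • h (y w)) (Icc a b) :=
    hr.smul_continuousOn (hLip.continuousOn.comp hy hyK) isCompact_Icc
  have hgn : IntegrableOn (fun w => rn w • h (yn w)) (Icc a b) :=
    hrn.smul_continuousOn (hLip.continuousOn.comp hyn hynK) isCompact_Icc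
  have hφ : IntegrableOn (fun w => ‖yn w - y w‖) (Icc a b) :=
    (hyn.sub hy).norm.integrableOn_compact isCompact_Icc
  have hdr : IntegrableOn (fun w => |rn w - r w|) (Icc a b) := (hrn.sub hr).abs
  have hpointwise : ∀ w ∈ Icc a b, ‖rn w • h (yn w) - r w • h (y w)‖ ≤
      κ * B * ‖yn w - y w‖ + |rn w - r w| * M := by
    intro w hw
    have hB : |rn w| ≤ B := hrnB w hw
    calc ‖rn w • h (yn w) - r w • h (y w)‖
        ≤ |rn w| * ‖h (yn w) - h (y w)‖ + |rn w - r w| * ‖h (y w)‖ :=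
          norm_smul_sub_smul_le _ _ _ _
      _ ≤ B * (κ * ‖yn w - y w‖) + |rn w - r w| * M := by
          gcongr
          · exact (abs_nonneg _).trans hB
          · exact hLip.norm_sub_le (hynK hw) (hyK hw)
          · exact hM _ (hyK hw)
      _ = κ * B * ‖yn w - y w‖ + |rn w - r w| * M := by ring
  calc ‖yn s - y s‖
      = ‖(un s - u s) + ∫ w in Icc a s, (rn w • h (yn w) - r w • h (y w))‖ := by
        rw [heqn s hs, heq s hs, integral_sub (hgn.mono_set hsub) (hg.mono_set hsub)]
        abel_nf
    _ ≤ A + ∫ w in Icc a s, (κ * B * ‖yn w - y w‖ + |rn w - r w| * M) := by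
        refine norm_add_le_of_le (hA s hs) (norm_integral_le_of_norm_le ?_ ?_)
        · exact ((hφ.mono_set hsub).const_mul _).add ((hdr.mono_set hsub).mul_const _)
        · exact ae_restrict_of_forall_mem measurableSet_Icc fun w hw => hpointwise w (hsub hw)
    _ = A + (∫ w in Icc a s, |rn w - r w|) * M + κ * B * ∫ w in Icc a s, ‖yn w - y w‖ := by
        rw [integral_add ((hφ.mono_set hsub).const_mul _) ((hdr.mono_set hsub).mul_const _),
          integral_const_mul, integral_mul_const]
        ring
    _ ≤ A + (∫ w in Icc a b, |rn w - r w|) * M + κ * B * ∫ w in a..s, ‖yn w - y w‖ := by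
        rw [intervalIntegral.integral_of_le hs.1, ← integral_Icc_eq_integral_Ioc]
        gcongr
        exact ae_of_all _ fun _ => abs_nonneg _

theorem norm_sub_le_mul_exp_of_integral_eq (hLip : LipschitzOnWith κ h K)
    (hM : ∀ z ∈ K, ‖h z‖ ≤ M)
    (hy : ContinuousOn y (Icc a b)) (hyn : ContinuousOn yn (Icc a b))
    (hyK : MapsTo y (Icc a b) K) (hynK : MapsTo yn (Icc a b) K)
    (hr : IntegrableOn r (Icc a b)) (hrn : IntegrableOn rn (Icc a b))
    (hrnB : ∀ w ∈ Icc a b, |rn w| ≤ B)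
    (heq : ∀ s ∈ Icc a b, y s = u s + ∫ w in Icc a s, r w • h (y w))
    (heqn : ∀ s ∈ Icc a b, yn s = un s + ∫ w in Icc a s, rn w • h (yn w))
    (hA : ∀ s ∈ Icc a b, ‖un s - u s‖ ≤ A) :
    ∀ s ∈ Icc a b, ‖yn s - y s‖ ≤
      (A + (∫ w in Icc a b, |rn w - r w|) * M) * exp (κ * B * (b - a)) := by
  intro s hs
  have ha : a ∈ Icc a b := left_mem_Icc.2 (hs.1.trans hs.2)
  have hB0 : 0 ≤ B := (abs_nonneg _).trans (hrnB a ha)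
  have hA0 : 0 ≤ A + (∫ w in Icc a b, |rn w - r w|) * M :=
    add_nonneg ((norm_nonneg _).trans (hA a ha)) (mul_nonneg
      (setIntegral_nonneg measurableSet_Icc fun _ _ => abs_nonneg _)
      ((norm_nonneg _).trans (hM _ (hyK ha))))
  calc ‖yn s - y s‖
      ≤ (A + (∫ w in Icc a b, |rn w - r w|) * M) * exp (κ * B * (s - a)) :=
        le_mul_exp_of_le_add_mul_integral (by positivity) (hyn.sub hy).norm
          (norm_sub_le_add_mul_integral_of_integral_eq hLip hM hy hyn hyK hynK hr hrn hrnB heq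
            heqn hA) s hs
    _ ≤ (A + (∫ w in Icc a b, |rn w - r w|) * M) * exp (κ * B * (b - a)) := by
        gcongr
        exact hs.2

end IntegralEquation

theorem stmt_18_general (m : ℕ) (R : ℝ) (κR : ℝ) (hκ : 0 ≤ κR)
    (h : EuclideanSpace ℝ (Fin m) → EuclideanSpace ℝ (Fin m))
    (hLip : ∀ z₁ ∈ Metric.closedBall (0 : EuclideanSpace ℝ (Fin m)) R,
      ∀ z₂ ∈ Metric.closedBall (0 : EuclideanSpace ℝ (Fin m)) R,
        ‖h z₁ - h z₂‖ ≤ κR * ‖z₁ - z₂‖)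
    (u un uy uyn : ℝ → EuclideanSpace ℝ (Fin m))
    (hu : ContinuousOn u (Set.Icc 0 1)) (hun : ContinuousOn un (Set.Icc 0 1))
    (huy : ContinuousOn uy (Set.Icc 0 1)) (huyn : ContinuousOn uyn (Set.Icc 0 1))
    (r' r'n : ℝ → ℝ)
    (hrn0 : ∀ w ∈ Set.Icc (0 : ℝ) 1, 0 ≤ r'n w)
    (hrint : IntegrableOn r' (Set.Icc 0 1))
    (hrnint : IntegrableOn r'n (Set.Icc 0 1))
    (hrnbdd : ∃ B : ℝ, ∀ w ∈ Set.Icc (0 : ℝ) 1, r'n w ≤ B)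
    (heq : ∀ s ∈ Set.Icc (0 : ℝ) 1,
      uy s = u s + ∫ w in Set.Icc (0 : ℝ) s, r' w • h (uy w))
    (heqn : ∀ s ∈ Set.Icc (0 : ℝ) 1,
      uyn s = un s + ∫ w in Set.Icc (0 : ℝ) s, r'n w • h (uyn w))
    (hinR : ∀ s ∈ Set.Icc (0 : ℝ) 1, ‖uy s‖ ≤ R)
    (hinRn : ∀ s ∈ Set.Icc (0 : ℝ) 1, ‖uyn s‖ ≤ R) :
    ∀ s ∈ Set.Icc (0 : ℝ) 1,
      ‖uyn s - uy s‖ ≤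
        ((⨆ t ∈ Set.Icc (0 : ℝ) 1, ‖un t - u t‖) +
            (∫ w in Set.Icc (0 : ℝ) 1, |r'n w - r' w|) *
              ⨆ z ∈ Metric.closedBall (0 : EuclideanSpace ℝ (Fin m)) R, ‖h z‖) *
          Real.exp (κR * ⨆ w ∈ Set.Icc (0 : ℝ) 1, r'n w) := by
  have hLipOn : LipschitzOnWith κR.toNNReal h (Metric.closedBall 0 R) :=
    .of_dist_le_mul fun z₁ hz₁ z₂ hz₂ => by
      simpa only [dist_eq_norm, Real.coe_toNNReal κR hκ] using hLip z₁ hz₁ z₂ hz₂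
  have hM : ∀ z ∈ Metric.closedBall (0 : EuclideanSpace ℝ (Fin m)) R,
      ‖h z‖ ≤ ⨆ z ∈ Metric.closedBall (0 : EuclideanSpace ℝ (Fin m)) R, ‖h z‖ :=
    fun z => le_cbiSup_of_bddAbove_image
      ((isCompact_closedBall 0 R).bddAbove_image hLipOn.continuousOn.norm)
  have hA : ∀ t ∈ Icc (0 : ℝ) 1, ‖un t - u t‖ ≤ ⨆ t ∈ Set.Icc (0 : ℝ) 1, ‖un t - u t‖ :=
    fun t => le_cbiSup_of_bddAbove_image (isCompact_Icc.bddAbove_image (hun.sub hu).norm)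
  have hB : ∀ w ∈ Icc (0 : ℝ) 1, |r'n w| ≤ ⨆ w ∈ Set.Icc (0 : ℝ) 1, r'n w := by
    obtain ⟨B, hB⟩ := hrnbdd
    intro w hw
    rw [abs_of_nonneg (hrn0 w hw)]
    exact le_cbiSup_of_bddAbove_image ⟨B, forall_mem_image.2 hB⟩ hw
  simpa only [Real.coe_toNNReal κR hκ, sub_zero, mul_one] using
    norm_sub_le_mul_exp_of_integral_eq hLipOn hM huy huyn
      (fun s hs => mem_closedBall_zero_iff.2 (hinR s hs))
      (fun s hs => mem_closedBall_zero_iff.2 (hinRn s hs)) hrint hrnint hB heq heqn hA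

/-- Gronwall comparison estimate from the proof of Lemma 4: if `h` is Lipschitz
with constant `κ_R` on the closed ball `B_R`, `u_y` and `u_{y_n}` solve the
respective integral equations and stay in `B_R`, then
`sup_s |u_{y_n}(s) - u_y(s)| ≤ (sup_s |u_n(s) - u(s)| + ‖r'_n - r'‖_{L¹} · sup_{B_R} |h|) · e^{κ_R ‖r'_n‖_∞}`. -/
theorem stmt_18 (m : ℕ) (R : ℝ) (hR : 0 < R) (κR : ℝ) (hκ : 0 ≤ κR)
    (h : EuclideanSpace ℝ (Fin m) → EuclideanSpace ℝ (Fin m))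
    (hLip : ∀ z₁ ∈ Metric.closedBall (0 : EuclideanSpace ℝ (Fin m)) R,
      ∀ z₂ ∈ Metric.closedBall (0 : EuclideanSpace ℝ (Fin m)) R,
        ‖h z₁ - h z₂‖ ≤ κR * ‖z₁ - z₂‖)
    (u un uy uyn : ℝ → EuclideanSpace ℝ (Fin m))
    (hu : ContinuousOn u (Set.Icc 0 1)) (hun : ContinuousOn un (Set.Icc 0 1))
    (huy : ContinuousOn uy (Set.Icc 0 1)) (huyn : ContinuousOn uyn (Set.Icc 0 1))
    (r' r'n : ℝ → ℝ)
    (hr0 : ∀ w ∈ Set.Icc (0 : ℝ) 1, 0 ≤ r' w)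
    (hrn0 : ∀ w ∈ Set.Icc (0 : ℝ) 1, 0 ≤ r'n w)
    (hrint : IntegrableOn r' (Set.Icc 0 1))
    (hrnint : IntegrableOn r'n (Set.Icc 0 1))
    (hrnbdd : ∃ B : ℝ, ∀ w ∈ Set.Icc (0 : ℝ) 1, r'n w ≤ B)
    (heq : ∀ s ∈ Set.Icc (0 : ℝ) 1,
      uy s = u s + ∫ w in Set.Icc (0 : ℝ) s, r' w • h (uy w))
    (heqn : ∀ s ∈ Set.Icc (0 : ℝ) 1,
      uyn s = un s + ∫ w in Set.Icc (0 : ℝ) s, r'n w • h (uyn w))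
    (hinR : ∀ s ∈ Set.Icc (0 : ℝ) 1, ‖uy s‖ ≤ R)
    (hinRn : ∀ s ∈ Set.Icc (0 : ℝ) 1, ‖uyn s‖ ≤ R) :
    ∀ s ∈ Set.Icc (0 : ℝ) 1,
      ‖uyn s - uy s‖ ≤
        ((⨆ t ∈ Set.Icc (0 : ℝ) 1, ‖un t - u t‖) +
            (∫ w in Set.Icc (0 : ℝ) 1, |r'n w - r' w|) *
              ⨆ z ∈ Metric.closedBall (0 : EuclideanSpace ℝ (Fin m)) R, ‖h z‖) *
          Real.exp (κR * ⨆ w ∈ Set.Icc (0 : ℝ) 1, r'n w) :=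
  stmt_18_general m R κR hκ h hLip u un uy uyn hu hun huy huyn r' r'n hrn0 hrint hrnint hrnbdd heq
    heqn hinR hinRn
end

section
/- Let h: ℝ^m → ℝ^m be locally Lipschitz and satisfy |h(z)| ≤ c(1 + |z|) for all z, with c > 0. Let u_n, u: [0,1] → ℝ^m be continuous with u_n → u uniformly on [0,1], and let r'_n, r': [0,1] → [0,∞) be measurable with sup_n sup_{w ∈ [0,1]} r'_n(w) < ∞, r' integrable, and ∫₀¹ |r'_n(w) - r'(w)| dw → 0 as n → ∞. Suppose u_y and u_{y_n} are continuous functions from [0,1] to ℝ^m satisfying u_y(s) = u(s) + ∫₀^s h(u_y(w)) r'(w) dw and u_{y_n}(s) = u_n(s) + ∫₀^s h(u_{y_n}(w)) r'_n(w) dw for all s ∈ [0,1] and all n. Then u_{y_n} → u_y uniformly on [0,1] as n → ∞. -/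
open MeasureTheory Filter

open Set Real NNReal

/-!
Both solutions stay in a fixed ball: by the linear growth of `h` and the uniform bound `B` on
`r'_n`, Grönwall's inequality bounds `u_{y_n}` uniformly in `n` as soon as `u_n` is uniformly
close to `u`. On that ball `h` is Lipschitz with some constant `K`, and the splitting
`r'_n h(u_{y_n}) - r' h(u_y) = r'_n (h(u_{y_n}) - h(u_y)) + (r'_n - r') h(u_y)`
together with Grönwall once more gives
`‖u_{y_n} - u_y‖ ≤ (sup ‖u_n - u‖ + sup ‖h ∘ u_y‖ * ∫₀¹ |r'_n - r'|) * exp (B * K)`.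
-/

theorem add_mul_gronwallBound_zero (K ε x : ℝ) :
    ε + K * gronwallBound 0 K ε x = ε * exp (K * x) := by
  rcases eq_or_ne K 0 with rfl | hK
  · simp
  · rw [gronwallBound_of_K_ne_0 hK]
    field_simp
    ring

theorem le_mul_exp_of_le_add_mul_setIntegral {g : ℝ → ℝ} {a b C L : ℝ}
    (hg : ContinuousOn g (Icc a b)) (hL : 0 ≤ L)
    (hle : ∀ s ∈ Icc a b, g s ≤ C + L * ∫ w in Icc a s, g w) :
    ∀ s ∈ Icc a b, g s ≤ C * exp (L * (s - a)) := by
  set F : ℝ → ℝ := fun s => ∫ w in Icc a s, g w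
  have hF_deriv : ∀ x ∈ Ico a b, HasDerivWithinAt F (g x) (Ici x) x := by
    intro x hx
    have : Fact (x ∈ Icc a b) := ⟨Ico_subset_Icc_self hx⟩
    have hint : IntervalIntegrable g volume a x :=
      (hg.mono (Icc_subset_Icc le_rfl hx.2.le)).intervalIntegrable_of_Icc hx.1
    have := intervalIntegral.integral_hasDerivWithinAt_right (s := Icc a b) hint
      (hg.stronglyMeasurableAtFilter_nhdsWithin measurableSet_Icc x) (hg x this.out)
    refine (this.mono_of_mem_nhdsWithin (Icc_mem_nhdsGE_of_mem hx)).congr (fun y hy => ?_) ?_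
    · rw [intervalIntegral.integral_of_le (hx.1.trans hy)]
      exact integral_Icc_eq_integral_Ioc
    · rw [intervalIntegral.integral_of_le hx.1]
      exact integral_Icc_eq_integral_Ioc
  have hF := le_gronwallBound_of_liminf_deriv_right_le
    (δ := 0) (K := L) (ε := C)
    (intervalIntegral.continuousOn_primitive_Icc hg.integrableOn_Icc)
    (fun x hx _ hr => (hF_deriv x hx).liminf_right_slope_le hr) (by simp)
    (fun x hx => by linarith [hle x (Ico_subset_Icc_self hx)])
  intro s hs
  calc g s ≤ C + L * F s := hle s hs
    _ ≤ C + L * gronwallBound 0 L C (s - a) := by gcongr; exact hF s hs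
    _ = C * exp (L * (s - a)) := add_mul_gronwallBound_zero L C (s - a)

theorem tendstoUniformlyOn_of_forall_eventually_dist_le_mul {α β ι : Type*}
    [PseudoMetricSpace β] {F : ι → α → β} {f : α → β} {p : Filter ι} {s : Set α} (C : ℝ)
    (h : ∀ ε > 0, ∀ᶠ n in p, ∀ x ∈ s, dist (f x) (F n x) ≤ C * ε) :
    TendstoUniformlyOn F f p s := by
  rw [Metric.tendstoUniformlyOn_iff]
  intro ε hε
  have hC : 0 < |C| + 1 := by positivity
  filter_upwards [h (ε / (|C| + 1)) (div_pos hε hC)] with n hn x hx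
  calc dist (f x) (F n x) ≤ C * (ε / (|C| + 1)) := hn x hx
    _ ≤ |C| * (ε / (|C| + 1)) := by gcongr; exact le_abs_self C
    _ < ε := by rw [← mul_div_assoc, div_lt_iff₀ hC]; nlinarith

section IntegralEquation

variable {E : Type*} [NormedAddCommGroup E] [NormedSpace ℝ E] {h : E → E}

theorem norm_le_of_eq_add_integral_smul {c A B : ℝ} (hh : ∀ z, ‖h z‖ ≤ c * (1 + ‖z‖))
    {x y : ℝ → E} {r : ℝ → ℝ} (hy : ContinuousOn y (Icc 0 1))
    (hx : ∀ s ∈ Icc (0 : ℝ) 1, ‖x s‖ ≤ A) (hr : ∀ w ∈ Icc (0 : ℝ) 1, |r w| ≤ B)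
    (heq : ∀ s ∈ Icc (0 : ℝ) 1, y s = x s + ∫ w in Icc 0 s, r w • h (y w)) :
    ∀ s ∈ Icc (0 : ℝ) 1, ‖y s‖ ≤ (A + B * c) * exp (B * c) := by
  have h01 : (0 : ℝ) ∈ Icc (0 : ℝ) 1 := left_mem_Icc.2 zero_le_one
  have hc : 0 ≤ c := by simpa using (norm_nonneg _).trans (hh 0)
  have hB0 : 0 ≤ B := (abs_nonneg _).trans (hr 0 h01)
  have hBc : 0 ≤ B * c := mul_nonneg hB0 hc
  have hA : 0 ≤ A + B * c := add_nonneg ((norm_nonneg _).trans (hx 0 h01)) hBc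
  have hle : ∀ s ∈ Icc (0 : ℝ) 1, ‖y s‖ ≤ (A + B * c) + B * c * ∫ w in Icc 0 s, ‖y w‖ := by
    intro s hs
    have hsub : Icc 0 s ⊆ Icc (0 : ℝ) 1 := Icc_subset_Icc_right hs.2
    have hint : IntegrableOn (fun w => ‖y w‖) (Icc 0 s) := (hy.mono hsub).norm.integrableOn_Icc
    have hint1 : IntegrableOn (fun _ => (1 : ℝ)) (Icc 0 s) := continuousOn_const.integrableOn_Icc
    have hbound : ‖∫ w in Icc 0 s, r w • h (y w)‖ ≤ ∫ w in Icc 0 s, B * c * (1 + ‖y w‖) := by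
      refine norm_integral_le_of_norm_le ((hint1.add hint).const_mul _)
        (ae_restrict_of_forall_mem measurableSet_Icc fun w hw => ?_)
      rw [norm_smul, Real.norm_eq_abs, mul_assoc]
      exact mul_le_mul (hr w (hsub hw)) (hh _) (norm_nonneg _) hB0
    have hval : ∫ w in Icc 0 s, B * c * (1 + ‖y w‖) = B * c * (s + ∫ w in Icc 0 s, ‖y w‖) := by
      rw [integral_const_mul, integral_add hint1 hint, setIntegral_const,
        Real.volume_real_Icc_of_le hs.1, smul_eq_mul, mul_one, sub_zero]
    calc ‖y s‖ = ‖x s + ∫ w in Icc 0 s, r w • h (y w)‖ := by rw [← heq s hs]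
      _ ≤ ‖x s‖ + ‖∫ w in Icc 0 s, r w • h (y w)‖ := norm_add_le _ _
      _ ≤ A + B * c * (s + ∫ w in Icc 0 s, ‖y w‖) := add_le_add (hx s hs) (hbound.trans_eq hval)
      _ ≤ (A + B * c) + B * c * ∫ w in Icc 0 s, ‖y w‖ := by nlinarith [hs.2]
  intro s hs
  calc ‖y s‖ ≤ (A + B * c) * exp (B * c * (s - 0)) :=
        le_mul_exp_of_le_add_mul_setIntegral hy.norm hBc hle s hs
    _ ≤ (A + B * c) * exp (B * c) := by
        gcongr (A + B * c) * exp ?_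
        rw [sub_zero]
        exact mul_le_of_le_one_right hBc hs.2

theorem norm_sub_le_of_eq_add_integral_smul {S : Set E} {K : ℝ≥0} (hK : LipschitzOnWith K h S)
    {x₁ x₂ y₁ y₂ : ℝ → E} {r₁ r₂ : ℝ → ℝ} {B M d : ℝ}
    (hr₁ : IntegrableOn r₁ (Icc 0 1)) (hr₂ : IntegrableOn r₂ (Icc 0 1))
    (hr₁B : ∀ w ∈ Icc (0 : ℝ) 1, |r₁ w| ≤ B)
    (hy₁ : ContinuousOn y₁ (Icc 0 1)) (hy₂ : ContinuousOn y₂ (Icc 0 1))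
    (hy₁S : MapsTo y₁ (Icc 0 1) S) (hy₂S : MapsTo y₂ (Icc 0 1) S)
    (hM : ∀ w ∈ Icc (0 : ℝ) 1, ‖h (y₂ w)‖ ≤ M) (hd : ∀ s ∈ Icc (0 : ℝ) 1, ‖x₁ s - x₂ s‖ ≤ d)
    (heq₁ : ∀ s ∈ Icc (0 : ℝ) 1, y₁ s = x₁ s + ∫ w in Icc 0 s, r₁ w • h (y₁ w))
    (heq₂ : ∀ s ∈ Icc (0 : ℝ) 1, y₂ s = x₂ s + ∫ w in Icc 0 s, r₂ w • h (y₂ w)) :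
    ∀ s ∈ Icc (0 : ℝ) 1,
      ‖y₁ s - y₂ s‖ ≤ (d + M * ∫ w in Icc 0 1, |r₁ w - r₂ w|) * exp (B * K) := by
  have h01 : (0 : ℝ) ∈ Icc (0 : ℝ) 1 := left_mem_Icc.2 zero_le_one
  have hM0 : 0 ≤ M := (norm_nonneg _).trans (hM 0 h01)
  have hB0 : 0 ≤ B := (abs_nonneg _).trans (hr₁B 0 h01)
  have hBK : 0 ≤ B * K := mul_nonneg hB0 K.2
  have hint₁ : IntegrableOn (fun w => r₁ w • h (y₁ w)) (Icc 0 1) :=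
    hr₁.smul_continuousOn (hK.continuousOn.comp hy₁ hy₁S) isCompact_Icc
  have hint₂ : IntegrableOn (fun w => r₂ w • h (y₂ w)) (Icc 0 1) :=
    hr₂.smul_continuousOn (hK.continuousOn.comp hy₂ hy₂S) isCompact_Icc
  have hdiff : IntegrableOn (fun w => |r₁ w - r₂ w|) (Icc 0 1) := (hr₁.sub hr₂).abs
  set I := ∫ w in Icc 0 1, |r₁ w - r₂ w|
  have hpt : ∀ w ∈ Icc (0 : ℝ) 1, ‖r₁ w • h (y₁ w) - r₂ w • h (y₂ w)‖ ≤
      B * K * ‖y₁ w - y₂ w‖ + M * |r₁ w - r₂ w| := by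
    intro w hw
    calc ‖r₁ w • h (y₁ w) - r₂ w • h (y₂ w)‖
        = ‖r₁ w • (h (y₁ w) - h (y₂ w)) + (r₁ w - r₂ w) • h (y₂ w)‖ := by
          rw [smul_sub, sub_smul, sub_add_sub_cancel]
      _ ≤ |r₁ w| * ‖h (y₁ w) - h (y₂ w)‖ + |r₁ w - r₂ w| * ‖h (y₂ w)‖ := by
          refine (norm_add_le _ _).trans_eq ?_
          rw [norm_smul, norm_smul, Real.norm_eq_abs, Real.norm_eq_abs]
      _ ≤ B * (K * ‖y₁ w - y₂ w‖) + |r₁ w - r₂ w| * M := by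
          gcongr
          · exact hr₁B w hw
          · exact hK.norm_sub_le (hy₁S hw) (hy₂S hw)
          · exact hM w hw
      _ = B * K * ‖y₁ w - y₂ w‖ + M * |r₁ w - r₂ w| := by ring
  have hle : ∀ s ∈ Icc (0 : ℝ) 1,
      ‖y₁ s - y₂ s‖ ≤ (d + M * I) + B * K * ∫ w in Icc 0 s, ‖y₁ w - y₂ w‖ := by
    intro s hs
    have hsub : Icc 0 s ⊆ Icc (0 : ℝ) 1 := Icc_subset_Icc_right hs.2
    have hint : IntegrableOn (fun w => ‖y₁ w - y₂ w‖) (Icc 0 s) :=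
      ((hy₁.sub hy₂).mono hsub).norm.integrableOn_Icc
    have hbound : ‖∫ w in Icc 0 s, (r₁ w • h (y₁ w) - r₂ w • h (y₂ w))‖ ≤
        ∫ w in Icc 0 s, (B * K * ‖y₁ w - y₂ w‖ + M * |r₁ w - r₂ w|) :=
      norm_integral_le_of_norm_le ((hint.const_mul _).add ((hdiff.mono_set hsub).const_mul _))
        (ae_restrict_of_forall_mem measurableSet_Icc fun w hw => hpt w (hsub hw))
    have hval : ∫ w in Icc 0 s, (B * K * ‖y₁ w - y₂ w‖ + M * |r₁ w - r₂ w|) =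
        B * K * (∫ w in Icc 0 s, ‖y₁ w - y₂ w‖) + M * ∫ w in Icc 0 s, |r₁ w - r₂ w| := by
      rw [integral_add (hint.const_mul _) ((hdiff.mono_set hsub).const_mul _),
        integral_const_mul, integral_const_mul]
    have hI : ∫ w in Icc 0 s, |r₁ w - r₂ w| ≤ I :=
      setIntegral_mono_set hdiff (ae_of_all _ fun w => abs_nonneg _) hsub.eventuallyLE
    calc ‖y₁ s - y₂ s‖
        = ‖(x₁ s - x₂ s) + ∫ w in Icc 0 s, (r₁ w • h (y₁ w) - r₂ w • h (y₂ w))‖ := by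
          rw [heq₁ s hs, heq₂ s hs, integral_sub (hint₁.mono_set hsub) (hint₂.mono_set hsub),
            add_sub_add_comm]
      _ ≤ ‖x₁ s - x₂ s‖ + ‖∫ w in Icc 0 s, (r₁ w • h (y₁ w) - r₂ w • h (y₂ w))‖ :=
          norm_add_le _ _
      _ ≤ d + (B * K * (∫ w in Icc 0 s, ‖y₁ w - y₂ w‖) + M * ∫ w in Icc 0 s, |r₁ w - r₂ w|) :=
          add_le_add (hd s hs) (hbound.trans_eq hval)
      _ ≤ (d + M * I) + B * K * ∫ w in Icc 0 s, ‖y₁ w - y₂ w‖ := by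
          nlinarith [mul_le_mul_of_nonneg_left hI hM0]
  have hdI : 0 ≤ d + M * I := add_nonneg ((norm_nonneg _).trans (hd 0 h01))
    (mul_nonneg hM0 (setIntegral_nonneg measurableSet_Icc fun w _ => abs_nonneg _))
  intro s hs
  calc ‖y₁ s - y₂ s‖ ≤ (d + M * I) * exp (B * K * (s - 0)) :=
        le_mul_exp_of_le_add_mul_setIntegral (hy₁.sub hy₂).norm hBK hle s hs
    _ ≤ (d + M * I) * exp (B * K) := by
        gcongr (d + M * I) * exp ?_
        rw [sub_zero]
        exact mul_le_of_le_one_right hBK hs.2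

end IntegralEquation

theorem stmt_19_general (m : ℕ) (c : ℝ)
    (h : EuclideanSpace ℝ (Fin m) → EuclideanSpace ℝ (Fin m))
    (hloc : LocallyLipschitz h)
    (hh : ∀ z, ‖h z‖ ≤ c * (1 + ‖z‖))
    (un : ℕ → ℝ → EuclideanSpace ℝ (Fin m)) (u : ℝ → EuclideanSpace ℝ (Fin m))
    (hu : ContinuousOn u (Set.Icc 0 1))
    (huconv : TendstoUniformlyOn un u atTop (Set.Icc 0 1))
    (r'n : ℕ → ℝ → ℝ) (r' : ℝ → ℝ)
    (hrn0 : ∀ n, ∀ w ∈ Set.Icc (0 : ℝ) 1, 0 ≤ r'n n w)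
    (hrnmeas : ∀ n, Measurable (r'n n))
    (hrnbdd : ∃ B : ℝ, ∀ n, ∀ w ∈ Set.Icc (0 : ℝ) 1, r'n n w ≤ B)
    (hrint : IntegrableOn r' (Set.Icc 0 1))
    (hL1 : Tendsto (fun n => ∫ w in Set.Icc (0 : ℝ) 1, |r'n n w - r' w|)
      atTop (nhds 0))
    (uyn : ℕ → ℝ → EuclideanSpace ℝ (Fin m)) (uy : ℝ → EuclideanSpace ℝ (Fin m))
    (huyn : ∀ n, ContinuousOn (uyn n) (Set.Icc 0 1))
    (huy : ContinuousOn uy (Set.Icc 0 1))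
    (heq : ∀ s ∈ Set.Icc (0 : ℝ) 1,
      uy s = u s + ∫ w in Set.Icc (0 : ℝ) s, r' w • h (uy w))
    (heqn : ∀ n, ∀ s ∈ Set.Icc (0 : ℝ) 1,
      uyn n s = un n s + ∫ w in Set.Icc (0 : ℝ) s, r'n n w • h (uyn n w)) :
    TendstoUniformlyOn uyn uy atTop (Set.Icc 0 1) := by
  obtain ⟨B, hB⟩ := hrnbdd
  have hrnB : ∀ n, ∀ w ∈ Icc (0 : ℝ) 1, |r'n n w| ≤ B := fun n w hw =>
    (abs_of_nonneg (hrn0 n w hw)).trans_le (hB n w hw)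
  have hrnint : ∀ n, IntegrableOn (r'n n) (Icc 0 1) := fun n =>
    Measure.integrableOn_of_bounded measure_Icc_lt_top.ne (hrnmeas n).aestronglyMeasurable
      (ae_restrict_of_forall_mem measurableSet_Icc (hrnB n))
  obtain ⟨Cu, hCu⟩ := isCompact_Icc.exists_bound_of_continuousOn hu
  obtain ⟨Ru, hRu⟩ := isCompact_Icc.exists_bound_of_continuousOn huy
  set R := (Cu + 1 + B * c) * exp (B * c)
  have hbound : ∀ᶠ n in atTop, ∀ s ∈ Icc (0 : ℝ) 1, ‖uyn n s‖ ≤ R := by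
    filter_upwards [Metric.tendstoUniformlyOn_iff.1 huconv 1 one_pos] with n hn
    refine norm_le_of_eq_add_integral_smul hh (huyn n) (fun s hs => ?_) (hrnB n) (heqn n)
    have := norm_le_insert' (un n s) (u s)
    rw [← dist_eq_norm, dist_comm] at this
    linarith [hCu s hs, hn s hs]
  obtain ⟨K, hK⟩ := LocallyLipschitzOn.exists_lipschitzOnWith_of_compact
    (isCompact_closedBall 0 (max R Ru)) hloc.locallyLipschitzOn
  obtain ⟨M, hM⟩ :=
    isCompact_Icc.exists_bound_of_continuousOn (hloc.continuous.comp_continuousOn huy)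
  have hM0 : 0 ≤ M := (norm_nonneg _).trans (hM 0 (left_mem_Icc.2 zero_le_one))
  refine tendstoUniformlyOn_of_forall_eventually_dist_le_mul ((1 + M) * exp (B * K)) fun ε hε => ?_
  filter_upwards [hbound, Metric.tendstoUniformlyOn_iff.1 huconv ε hε, hL1.eventually_lt_const hε]
    with n hn hun hI s hs
  rw [dist_comm, dist_eq_norm]
  calc ‖uyn n s - uy s‖ ≤ (ε + M * ∫ w in Icc 0 1, |r'n n w - r' w|) * exp (B * K) :=
        norm_sub_le_of_eq_add_integral_smul hK (hrnint n) hrint (hrnB n) (huyn n) huy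
          (fun s hs => mem_closedBall_zero_iff.2 ((hn s hs).trans (le_max_left _ _)))
          (fun s hs => mem_closedBall_zero_iff.2 ((hRu s hs).trans (le_max_right _ _)))
          hM (fun s hs => by rw [← dist_eq_norm, dist_comm]; exact (hun s hs).le) (heqn n) heq s hs
    _ ≤ (ε + M * ε) * exp (B * K) := by gcongr
    _ = (1 + M) * exp (B * K) * ε := by ring

/-- Core convergence assertion behind Lemma 4 (continuity of the integral mapping
in the `M₁` topology), stated in terms of parametric representations: if `h` is
locally Lipschitz with linear growth, `u_n → u` uniformly on `[0,1]`, the time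
derivatives `r'_n` are uniformly bounded with `∫₀¹ |r'_n - r'| → 0`, and `u_y`,
`u_{y_n}` solve the corresponding integral equations, then `u_{y_n} → u_y`
uniformly on `[0,1]`. -/
theorem stmt_19 (m : ℕ) (c : ℝ) (hc : 0 < c)
    (h : EuclideanSpace ℝ (Fin m) → EuclideanSpace ℝ (Fin m))
    (hloc : LocallyLipschitz h)
    (hh : ∀ z, ‖h z‖ ≤ c * (1 + ‖z‖))
    (un : ℕ → ℝ → EuclideanSpace ℝ (Fin m)) (u : ℝ → EuclideanSpace ℝ (Fin m))
    (hun : ∀ n, ContinuousOn (un n) (Set.Icc 0 1))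
    (hu : ContinuousOn u (Set.Icc 0 1))
    (huconv : TendstoUniformlyOn un u atTop (Set.Icc 0 1))
    (r'n : ℕ → ℝ → ℝ) (r' : ℝ → ℝ)
    (hrn0 : ∀ n, ∀ w ∈ Set.Icc (0 : ℝ) 1, 0 ≤ r'n n w)
    (hr0 : ∀ w ∈ Set.Icc (0 : ℝ) 1, 0 ≤ r' w)
    (hrnmeas : ∀ n, Measurable (r'n n))
    (hrnbdd : ∃ B : ℝ, ∀ n, ∀ w ∈ Set.Icc (0 : ℝ) 1, r'n n w ≤ B)
    (hrint : IntegrableOn r' (Set.Icc 0 1))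
    (hL1 : Tendsto (fun n => ∫ w in Set.Icc (0 : ℝ) 1, |r'n n w - r' w|)
      atTop (nhds 0))
    (uyn : ℕ → ℝ → EuclideanSpace ℝ (Fin m)) (uy : ℝ → EuclideanSpace ℝ (Fin m))
    (huyn : ∀ n, ContinuousOn (uyn n) (Set.Icc 0 1))
    (huy : ContinuousOn uy (Set.Icc 0 1))
    (heq : ∀ s ∈ Set.Icc (0 : ℝ) 1,
      uy s = u s + ∫ w in Set.Icc (0 : ℝ) s, r' w • h (uy w))
    (heqn : ∀ n, ∀ s ∈ Set.Icc (0 : ℝ) 1,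
      uyn n s = un n s + ∫ w in Set.Icc (0 : ℝ) s, r'n n w • h (uyn n w)) :
    TendstoUniformlyOn uyn uy atTop (Set.Icc 0 1) :=
  stmt_19_general m c h hloc hh un u hu huconv r'n r' hrn0 hrnmeas hrnbdd hrint hL1 uyn uy huyn huy
    heq heqn
end
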